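/- arXiv:2512.05250 — 3 statements merged into one kernel-verified Lean document; each statement's English description precedes it below -/
import Mathlib

section
/- Let a, b be the generators of the free noncommutative ring over the integers, and let c = a + b, d = ab + ba. If p, q, h are noncommutative polynomials in two variables such that p(c,d) + q(c,d)·b = h(c,d), then q(c,d) = 0. (Equivalently: the ring automorphism swapping a and b fixes c and d, and an element of the form q(c,d)·b fixed by this automorphism must be zero when q(c,d) ≠ 0, hence q(c,d)·b = 0.) -/
/-- If `p(c,d) + q(c,d) * b` lies in the subring generated by `c` and `d`
(in particular if it equals some `h(c,d)`), then `q(c,d) = 0`. -/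
theorem vanishing_b
    (a b c d : FreeAlgebra ℤ (Fin 2))
    (ha : a = FreeAlgebra.ι ℤ 0) (hb : b = FreeAlgebra.ι ℤ 1)
    (hc : c = a + b) (hd : d = a * b + b * a)
    (S : Subring (FreeAlgebra ℤ (Fin 2))) (hS : S = Subring.closure {c, d})
    (p q h : FreeAlgebra ℤ (Fin 2))
    (hp : p ∈ S) (hq : q ∈ S) (hh : h ∈ S)
    (heq : p + q * b = h) :
    q = 0 := by
  -- the swap algebra homomorphism
  set σ : FreeAlgebra ℤ (Fin 2) →ₐ[ℤ] FreeAlgebra ℤ (Fin 2) :=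
    FreeAlgebra.lift ℤ (fun i => FreeAlgebra.ι ℤ (if i = 0 then 1 else 0)) with hσ
  have hσa : σ a = b := by simp [hσ, ha, hb]
  have hσb : σ b = a := by simp [hσ, ha, hb]
  have hσc : σ c = c := by simp [hc, map_add, hσa, hσb, add_comm]
  have hσd : σ d = d := by simp [hd, map_add, map_mul, hσa, hσb, add_comm]
  -- σ fixes S
  have hfix : ∀ x ∈ S, σ x = x := by
    intro x hx
    rw [hS] at hx
    induction hx using Subring.closure_induction with
    | mem y hy =>
      rcases hy with hy | hy
      · rw [hy]; exact hσc
      · rw [Set.mem_singleton_iff] at hy; rw [hy]; exact hσd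
    | zero => simp
    | one => simp
    | add x y _ _ hx hy => simp [map_add, hx, hy]
    | neg x _ hx => simp [map_neg, hx]
    | mul x y _ _ hx hy => simp [map_mul, hx, hy]
  have h1 : p + q * a = h := by
    have := congrArg σ heq
    rw [map_add, map_mul, hσb, hfix p hp, hfix q hq, hfix h hh] at this
    exact this
  have h2 : q * (b - a) = 0 := by
    have : q * b = q * a := by
      have := heq.trans h1.symm
      exact add_left_cancel this
    rw [mul_sub, this, sub_self]
  have hba : b - a ≠ 0 := by
    intro hzero
    have := congrArg (FreeAlgebra.lift ℤ (fun i : Fin 2 => (i : ℤ))) hzero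
    simp [ha, hb] at this
  rcases mul_eq_zero.mp h2 with hq0 | hba0
  · exact hq0
  · exact absurd hba0 hba
end

section
/- Let E be a finite set with n elements, k ≤ n, F ⊆ E with |F| = h, and 0 < r < min(k, h) with also k - r < n - h (so that the cuspidal matroid is well-defined). Then the family B = {B ⊆ E : |B| = k and |B ∩ F| ≤ r} satisfies the basis exchange property: for all B₁, B₂ ∈ B and x ∈ B₁ \ B₂, there exists y ∈ B₂ \ B₁ such that (B₁ \ {x}) ∪ {y} ∈ B. Hence B is the set of bases of a matroid of rank k on E. -/
open Finset

/-- The family of bases of the cuspidal matroid `Λ^{r,F}_{k,n}` satisfies the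
basis exchange property. -/
theorem cuspidal_exchange (n k r h : ℕ) (F : Finset (Fin n)) (hF : F.card = h)
    (hr0 : 0 < r) (hrk : r < k) (hrh : r < h) (hcorank : k - r < n - h)
    (B₁ B₂ : Finset (Fin n))
    (hB₁ : B₁.card = k ∧ (B₁ ∩ F).card ≤ r)
    (hB₂ : B₂.card = k ∧ (B₂ ∩ F).card ≤ r)
    (x : Fin n) (hx : x ∈ B₁ \ B₂) :
    ∃ y ∈ B₂ \ B₁,
      (insert y (B₁.erase x)).card = k ∧ ((insert y (B₁.erase x)) ∩ F).card ≤ r := by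
  obtain ⟨hk1, hf1⟩ := hB₁
  obtain ⟨hk2, hf2⟩ := hB₂
  rw [mem_sdiff] at hx
  obtain ⟨hxB₁, hxB₂⟩ := hx
  have hcard : ∀ y ∈ B₂ \ B₁, (insert y (B₁.erase x)).card = k := by
    intro y hy
    rw [card_insert_of_notMem (fun hmem => (mem_sdiff.1 hy).2 (mem_of_mem_erase hmem)),
      card_erase_of_mem hxB₁, hk1]
    omega
  have hne : (B₂ \ B₁).Nonempty := by
    rw [sdiff_nonempty]
    intro hsub
    have := eq_of_subset_of_card_le hsub (by omega)
    exact hxB₂ (this ▸ hxB₁)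
  have hins : ∀ (y : Fin n) (s : Finset (Fin n)),
      (insert y s ∩ F).card ≤ (s ∩ F).card + 1 := by
    intro y s
    calc (insert y s ∩ F).card ≤ (insert y (s ∩ F)).card := by
          apply card_le_card
          intro z hz
          rw [mem_inter, mem_insert] at hz
          rcases hz.1 with h' | h'
          · exact h' ▸ mem_insert_self _ _
          · exact mem_insert_of_mem (mem_inter.2 ⟨h', hz.2⟩)
      _ ≤ (s ∩ F).card + 1 := card_insert_le _ _
  by_cases hxF : x ∈ F
  · obtain ⟨y, hy⟩ := hne
    refine ⟨y, hy, hcard y hy, ?_⟩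
    have h1 : ((B₁.erase x) ∩ F).card = (B₁ ∩ F).card - 1 := by
      rw [erase_inter, card_erase_of_mem (mem_inter.2 ⟨hxB₁, hxF⟩)]
    have h2 : 0 < (B₁ ∩ F).card := card_pos.2 ⟨x, mem_inter.2 ⟨hxB₁, hxF⟩⟩
    have := hins y (B₁.erase x)
    omega
  · have herase : (B₁.erase x) ∩ F = B₁ ∩ F := by
      rw [erase_inter, erase_eq_of_notMem (fun hmem => hxF (mem_inter.1 hmem).2)]
    by_cases hlt : (B₁ ∩ F).card < r
    · obtain ⟨y, hy⟩ := hne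
      refine ⟨y, hy, hcard y hy, ?_⟩
      have := hins y (B₁.erase x)
      rw [herase] at this
      omega
    · have hex : ∃ y ∈ B₂ \ B₁, y ∉ F := by
        by_contra hall
        push_neg at hall
        have hsub : B₂ \ F ⊆ B₁ \ F := by
          intro z hz
          rw [mem_sdiff] at hz ⊢
          refine ⟨?_, hz.2⟩
          by_contra hzB₁
          exact hz.2 (hall z (mem_sdiff.2 ⟨hz.1, hzB₁⟩))
        have hc1 : (B₁ ∩ F).card + (B₁ \ F).card = B₁.card := card_inter_add_card_sdiff _ _
        have hc2 : (B₂ ∩ F).card + (B₂ \ F).card = B₂.card := card_inter_add_card_sdiff _ _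
        have heq : B₂ \ F = B₁ \ F := eq_of_subset_of_card_le hsub (by omega)
        have : x ∈ B₂ \ F := heq ▸ (mem_sdiff.2 ⟨hxB₁, hxF⟩)
        exact hxB₂ (mem_sdiff.1 this).1
      obtain ⟨y, hy, hyF⟩ := hex
      refine ⟨y, hy, hcard y hy, ?_⟩
      rw [insert_inter_of_notMem hyF, herase]
      exact hf1
end

section
/- Let Λ = Λ^{r,F}_{k,n} be the cuspidal matroid on ground set E (|E| = n) with bases {B : |B| = k, |B ∩ F| ≤ r}, where |F| = h, 0 < r < min(k,h), k - r < n - h. Then the circuits of Λ are exactly the (r+1)-subsets of F together with the (k+1)-subsets C of E satisfying |C ∩ F| ≤ r + 1 that contain no (r+1)-subset of F (equivalently: minimal dependent sets are the (r+1)-subsets of F and (k+1)-subsets meeting F in at most r elements). -/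
open Finset

lemma cuspidal_indep_char (n k r h : ℕ) (F : Finset (Fin n)) (hF : F.card = h)
    (hrk : r < k) (hrh : r < h) (hcorank : k - r < n - h)
    (S : Finset (Fin n)) :
    (∃ B : Finset (Fin n), S ⊆ B ∧ B.card = k ∧ (B ∩ F).card ≤ r) ↔
      S.card ≤ k ∧ (S ∩ F).card ≤ r := by
  constructor
  · rintro ⟨B, hSB, hBk, hBF⟩
    exact ⟨hBk ▸ card_le_card hSB,
      le_trans (card_le_card (inter_subset_inter_right hSB)) hBF⟩
  · rintro ⟨hSk, hSF⟩
    -- first pad inside F up to `c = min r (k - (S \ F).card)`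
    set c := min r (k - (S \ F).card) with hc
    have hSsplit : (S ∩ F).card + (S \ F).card = S.card := by
      rw [add_comm]; exact Finset.card_sdiff_add_card_inter S F
    have hSFc : (S ∩ F).card ≤ c := le_min hSF (by omega)
    have hcF : c ≤ F.card := by rw [hF]; omega
    obtain ⟨G, hSG, hGF, hGc⟩ :=
      exists_subsuperset_card_eq (inter_subset_right) hSFc hcF
    -- S' = S ∪ G
    have hS'F : (S ∪ G) ∩ F = G := by
      rw [union_inter_distrib_right]
      rw [inter_eq_left.mpr hGF]
      exact union_eq_right.mpr hSG
    have hS'card : (S ∪ G).card ≤ k := by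
      have : (S ∪ G) = (S \ F) ∪ G := by
        ext x
        simp only [mem_union, mem_sdiff]
        constructor
        · rintro (hx | hx)
          · by_cases hxF : x ∈ F
            · exact Or.inr (hSG (mem_inter.mpr ⟨hx, hxF⟩))
            · exact Or.inl ⟨hx, hxF⟩
          · exact Or.inr hx
        · rintro (⟨hx, _⟩ | hx)
          · exact Or.inl hx
          · exact Or.inr hx
      rw [this]
      have hdisj : Disjoint (S \ F) G :=
        disjoint_left.mpr fun x hx hxG => (mem_sdiff.mp hx).2 (hGF hxG)
      rw [card_union_of_disjoint hdisj, hGc]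
      omega
    -- now extend outside F
    have hcard_big : k ≤ ((S ∪ G) ∪ Fᶜ).card := by
      have hdisj : Disjoint ((S ∪ G) ∩ F) (Fᶜ \ (S ∪ G)) := by
        refine disjoint_left.mpr fun x hx hx' => ?_
        simp only [mem_sdiff, mem_compl] at hx'
        exact hx'.1 (mem_inter.mp hx).2
      have hun : (S ∪ G) ∪ Fᶜ = ((S ∪ G) ∩ F) ∪ ((S ∪ G) ∪ (Fᶜ \ (S ∪ G))) := by
        ext x
        by_cases hxF : x ∈ F <;> simp [mem_union, mem_inter, mem_sdiff, mem_compl, hxF] <;> tauto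
      have hcompl : Fᶜ.card = n - h := by
        rw [card_compl, hF, Fintype.card_fin]
      have h2 : ((S ∪ G) ∪ Fᶜ).card = (S ∪ G).card + (Fᶜ \ (S ∪ G)).card := by
        rw [← card_union_of_disjoint (disjoint_sdiff (s := S ∪ G) (t := Fᶜ))]
        congr 1
        ext x; by_cases hx : x ∈ S ∪ G <;> simp [hx]
      have hsd : Fᶜ \ (S ∪ G) = Fᶜ \ S := by
        ext x
        simp only [mem_sdiff, mem_compl, mem_union]
        constructor
        · rintro ⟨hx1, hx2⟩; exact ⟨hx1, fun hxS => hx2 (Or.inl hxS)⟩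
        · rintro ⟨hx1, hx2⟩
          exact ⟨hx1, fun hx => hx.elim hx2 (fun hxG => hx1 (hGF hxG))⟩
      have hinter : Fᶜ ∩ S = S \ F := by
        ext x; simp [mem_sdiff, mem_compl, mem_inter, and_comm]
      have h3 : (Fᶜ \ S).card + (S \ F).card = n - h := by
        rw [← hinter, ← hcompl]
        exact Finset.card_sdiff_add_card_inter Fᶜ S
      rw [hsd] at h2
      -- (S∪G).card = c + (S\F).card ; (Fᶜ).card = n - h
      have hS'eq : (S ∪ G).card = c + (S \ F).card := by
        have hdisj2 : Disjoint (S \ F) G :=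
          disjoint_left.mpr fun x hx hxG => (mem_sdiff.mp hx).2 (hGF hxG)
        have : (S ∪ G) = (S \ F) ∪ G := by
          ext x
          simp only [mem_union, mem_sdiff]
          constructor
          · rintro (hx | hx)
            · by_cases hxF : x ∈ F
              · exact Or.inr (hSG (mem_inter.mpr ⟨hx, hxF⟩))
              · exact Or.inl ⟨hx, hxF⟩
            · exact Or.inr hx
          · rintro (⟨hx, _⟩ | hx)
            · exact Or.inl hx
            · exact Or.inr hx
        rw [this, card_union_of_disjoint hdisj2, hGc]; omega
      have hSFsub : S \ F ⊆ Fᶜ := fun x hx => mem_compl.mpr (mem_sdiff.mp hx).2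
      have h5 : (S \ F).card ≤ n - h := by
        rw [← hcompl]; exact card_le_card hSFsub
      rw [h2, hS'eq]
      -- need k ≤ c + (S\F).card + (Fᶜ \ (S∪G)).card
      -- (Fᶜ \ (S∪G)).card ≥ (n-h) - (c + (S\F).card)
      rcases le_or_gt r (k - (S \ F).card) with hcase | hcase
      · have : c = r := by omega
        omega
      · have : c = k - (S \ F).card := by omega
        omega
    obtain ⟨B, hSB, hBsub, hBk⟩ :=
      exists_subsuperset_card_eq (subset_union_left) hS'card hcard_big
    refine ⟨B, (subset_union_left).trans hSB, hBk, ?_⟩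
    have : B ∩ F ⊆ (S ∪ G) ∩ F := by
      intro x hx
      obtain ⟨hxB, hxF⟩ := mem_inter.mp hx
      rcases mem_union.mp (hBsub hxB) with hx' | hx'
      · exact mem_inter.mpr ⟨hx', hxF⟩
      · exact absurd hxF (mem_compl.mp hx')
    calc (B ∩ F).card ≤ ((S ∪ G) ∩ F).card := card_le_card this
      _ = c := by rw [hS'F, hGc]
      _ ≤ r := min_le_left _ _

/-- The circuits of the cuspidal matroid `Λ^{r,F}_{k,n}` are the `(r+1)`-subsets of `F`
together with the `(k+1)`-subsets meeting `F` in at most `r` elements. -/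
theorem cuspidal_circuits (n k r h : ℕ) (F : Finset (Fin n)) (hF : F.card = h)
    (hr0 : 0 < r) (hrk : r < k) (hrh : r < h) (hcorank : k - r < n - h)
    (Indep : Finset (Fin n) → Prop)
    (hIndep : ∀ S, Indep S ↔ ∃ B : Finset (Fin n),
      S ⊆ B ∧ B.card = k ∧ (B ∩ F).card ≤ r)
    (C : Finset (Fin n)) :
    (¬ Indep C ∧ ∀ C' ⊂ C, Indep C') ↔
      (C ⊆ F ∧ C.card = r + 1) ∨ (C.card = k + 1 ∧ (C ∩ F).card ≤ r) := by
  have key : ∀ S, Indep S ↔ S.card ≤ k ∧ (S ∩ F).card ≤ r := fun S =>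
    (hIndep S).trans (cuspidal_indep_char n k r h F hF hrk hrh hcorank S)
  simp only [key]
  constructor
  · rintro ⟨hdep, hmin⟩
    push_neg at hdep
    by_cases hCF : (C ∩ F).card ≤ r
    · -- then C.card > k
      have hCk : k < C.card := by
        by_contra hle
        push_neg at hle
        rcases hdep hle with h'
        omega
      obtain ⟨D, hDC, hDk⟩ := exists_subset_card_eq (n := k + 1) (by omega : k + 1 ≤ C.card)
      have hDeq : D = C := by
        by_contra hne
        have := hmin D (ssubset_of_subset_of_ne hDC hne)
        omega
      subst hDeq
      exact Or.inr ⟨hDk, hCF⟩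
    · push_neg at hCF
      obtain ⟨D, hDCF, hDr⟩ := exists_subset_card_eq (n := r + 1) (by omega : r + 1 ≤ (C ∩ F).card)
      have hDC : D ⊆ C := hDCF.trans inter_subset_left
      have hDF : D ⊆ F := hDCF.trans inter_subset_right
      have hDdep : ¬ (D.card ≤ k ∧ (D ∩ F).card ≤ r) := by
        rw [inter_eq_left.mpr hDF]
        omega
      have hDeq : D = C := by
        by_contra hne
        exact hDdep (hmin D (ssubset_of_subset_of_ne hDC hne))
      subst hDeq
      exact Or.inl ⟨hDF, hDr⟩
  · rintro (⟨hCF, hCr⟩ | ⟨hCk, hCF⟩)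
    · constructor
      · rw [inter_eq_left.mpr hCF]
        omega
      · intro C' hC'
        have h1 : C'.card < C.card := card_lt_card hC'
        have h2 : (C' ∩ F).card ≤ C'.card := card_le_card inter_subset_left
        omega
    · constructor
      · omega
      · intro C' hC'
        have h1 : C'.card < C.card := card_lt_card hC'
        have h2 : (C' ∩ F).card ≤ (C ∩ F).card :=
          card_le_card (inter_subset_inter_right hC'.subset)
        omega
end
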